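/- Sensitivity of the empirical second-moment matrix of unit-normalized data (supporting Algorithm RON-Gauss, step 4): let x⁽¹⁾, …, x⁽ⁿ⁾ ∈ ℝ^p with n ≥ 1 and ‖x⁽ⁱ⁾‖₂ ≤ 1 for all i, and let x'⁽¹⁾, …, x'⁽ⁿ⁾ be obtained by replacing exactly one vector x⁽ʲ⁾ by another vector x'⁽ʲ⁾ with ‖x'⁽ʲ⁾‖₂ ≤ 1. Then the matrices Σ = (1/n) ∑ᵢ x⁽ⁱ⁾ (x⁽ⁱ⁾)ᵀ and Σ' = (1/n) ∑ᵢ x'⁽ⁱ⁾ (x'⁽ⁱ⁾)ᵀ satisfy ‖Σ − Σ'‖_F ≤ 2/n, where ‖·‖_F denotes the Frobenius norm. -/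

import Mathlib

/-! Replacing one record changes the sum of outer products only in the term `a aᵀ - b bᵀ`, and
`‖a aᵀ‖_F ≤ ‖a‖² ≤ 1` because `a aᵀ` is the product of a column and a row matrix. -/

open Matrix WithLp
open scoped Matrix.Norms.Frobenius

namespace Matrix

theorem frobenius_norm_eq_sqrt {m n : Type*} [Fintype m] [Fintype n] (A : Matrix m n ℝ) :
    ‖A‖ = √(∑ i, ∑ j, A i j ^ 2) := by
  simp [frobenius_norm_def, Real.sqrt_eq_rpow]

theorem frobenius_norm_vecMulVec_le {𝕜 m n : Type*} [RCLike 𝕜] [Fintype m] [Fintype n]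
    (a : m → 𝕜) (b : n → 𝕜) : ‖vecMulVec a b‖ ≤ ‖toLp 2 a‖ * ‖toLp 2 b‖ := by
  rw [vecMulVec_eq Unit]
  simpa using frobenius_norm_mul (replicateCol Unit a) (replicateRow Unit b)

end Matrix

noncomputable def secondMoment {ι m : Type*} [Fintype ι] [Fintype m]
    (x : m → EuclideanSpace ℝ ι) : Matrix ι ι ℝ :=
  (Fintype.card m : ℝ)⁻¹ • ∑ i, vecMulVec (x i).ofLp (x i).ofLp

theorem secondMoment_sub_eq_smul_of_forall_ne {ι m : Type*} [Fintype ι] [Fintype m]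
    {x x' : m → EuclideanSpace ℝ ι} {j₀ : m} (h : ∀ i, i ≠ j₀ → x i = x' i) :
    secondMoment x - secondMoment x' = (Fintype.card m : ℝ)⁻¹ •
      (vecMulVec (x j₀).ofLp (x j₀).ofLp - vecMulVec (x' j₀).ofLp (x' j₀).ofLp) := by
  rw [secondMoment, secondMoment, ← smul_sub, ← Finset.sum_sub_distrib,
    Fintype.sum_eq_single j₀ fun i hi => by rw [h i hi, sub_self]]

theorem norm_secondMoment_sub_le {ι m : Type*} [Fintype ι] [Fintype m]
    {x x' : m → EuclideanSpace ℝ ι} (hx : ∀ i, ‖x i‖ ≤ 1) (hx' : ∀ i, ‖x' i‖ ≤ 1)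
    {j₀ : m} (h : ∀ i, i ≠ j₀ → x i = x' i) :
    ‖secondMoment x - secondMoment x'‖ ≤ 2 / Fintype.card m := by
  set a := x j₀
  set b := x' j₀
  have hab : ‖vecMulVec a.ofLp a.ofLp - vecMulVec b.ofLp b.ofLp‖ ≤ 2 :=
    calc _ ≤ ‖vecMulVec a.ofLp a.ofLp‖ + ‖vecMulVec b.ofLp b.ofLp‖ := norm_sub_le _ _
      _ ≤ ‖a‖ * ‖a‖ + ‖b‖ * ‖b‖ :=
        add_le_add (frobenius_norm_vecMulVec_le _ _) (frobenius_norm_vecMulVec_le _ _)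
      _ ≤ 1 * 1 + 1 * 1 := by gcongr; exacts [hx j₀, hx j₀, hx' j₀, hx' j₀]
      _ = 2 := by norm_num
  rw [secondMoment_sub_eq_smul_of_forall_ne h, norm_smul, Real.norm_of_nonneg (by positivity),
    div_eq_inv_mul]
  gcongr

theorem second_moment_replacement_sensitivity_general
    {p n : ℕ}
    (x x' : Fin n → EuclideanSpace ℝ (Fin p))
    (hx : ∀ i, ‖x i‖ ≤ 1) (hx' : ∀ i, ‖x' i‖ ≤ 1)
    (j₀ : Fin n) (hdiff : ∀ i, i ≠ j₀ → x i = x' i) :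
    Real.sqrt (∑ j, ∑ k,
        ((1 / (n : ℝ)) * ∑ i, x i j * x i k
          - (1 / (n : ℝ)) * ∑ i, x' i j * x' i k) ^ 2) ≤ 2 / n := by
  have h := norm_secondMoment_sub_le hx hx' hdiff
  rw [frobenius_norm_eq_sqrt, Fintype.card_fin] at h
  simpa [secondMoment, vecMulVec_apply, Matrix.sum_apply, one_div] using h

/-- **Sensitivity of the empirical second-moment matrix of unit-normalized data**
(supporting RON-Gauss, step 4).  Let `x 0, …, x (n-1) ∈ ℝ^p` with `n ≥ 1` and
`‖x i‖₂ ≤ 1` for all `i`, and let `x'` be obtained by replacing exactly one vector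
`x j₀` by another vector `x' j₀` with `‖x' j₀‖₂ ≤ 1`.  Then the second-moment matrices
`Σ = (1/n) ∑ i, x i (x i)ᵀ` and `Σ' = (1/n) ∑ i, x' i (x' i)ᵀ` satisfy
`‖Σ - Σ'‖_F ≤ 2 / n`, where `‖A‖_F = (∑ j k, A j k ^ 2)^(1/2)` is the Frobenius
norm. -/
theorem second_moment_replacement_sensitivity
    {p n : ℕ} (hn : 1 ≤ n)
    (x x' : Fin n → EuclideanSpace ℝ (Fin p))
    (hx : ∀ i, ‖x i‖ ≤ 1) (hx' : ∀ i, ‖x' i‖ ≤ 1)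
    (j₀ : Fin n) (hdiff : ∀ i, i ≠ j₀ → x i = x' i) :
    Real.sqrt (∑ j, ∑ k,
        ((1 / (n : ℝ)) * ∑ i, x i j * x i k
          - (1 / (n : ℝ)) * ∑ i, x' i j * x' i k) ^ 2) ≤ 2 / n :=
  second_moment_replacement_sensitivity_general x x' hx hx' j₀ hdiff
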